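/- The map sending x ∈ X to the homomorphism y ↦ ⟨𝔄⁻¹(y), x⟩ mod ℤ (where 𝔄⁻¹(y) ∈ ℚ⊗Y and ⟨,⟩ is extended ℚ-bilinearly) descends to a well-defined group isomorphism X/𝔄'(X) ≅ Hom(Y/𝔄(Y), ℚ/ℤ). -/

import Mathlib

/-!
Apply `Hom(Y, -)` to `0 → ℤ → ℚ → ℚ/ℤ → 0`; since `Y` is free the rows stay exact, and
`𝔄` acts on them by precomposition. On `Hom(Y, ℚ)` this action is bijective, because the
adjugate `g` of `𝔄` satisfies `𝔄 ∘ g = g ∘ 𝔄 = det 𝔄`. The snake lemma therefore identifies the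
cokernel of `𝔄` on `Hom(Y, ℤ) ≅ X`, which is `X / 𝔄'(X)`, with the kernel of `𝔄` on
`Hom(Y, ℚ/ℤ)`, which is `Hom(Y / 𝔄(Y), ℚ/ℤ)`; the connecting map is
`x ↦ (y ↦ ⟨𝔄⁻¹ y, x⟩ mod ℤ)`.
-/

open LinearMap

namespace LinearMap

variable {R M : Type*} [CommRing R] [AddCommGroup M] [Module R M]

theorem exists_comp_eq_det_smul_id [Module.Free R M] [Module.Finite R M] (f : M →ₗ[R] M) :
    ∃ g : M →ₗ[R] M, f ∘ₗ g = LinearMap.det f • id ∧ g ∘ₗ f = LinearMap.det f • id := by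
  let e := toMatrixAlgEquiv (Module.Free.chooseBasis R M)
  have hdet : (e f).det = LinearMap.det f := det_toMatrix _ f
  refine ⟨e.symm (e f).adjugate, e.injective ?_, e.injective ?_⟩
  · rw [← Module.End.mul_eq_comp, map_mul, e.apply_symm_apply, Matrix.mul_adjugate, map_smul,
      ← Module.End.one_eq_id, map_one, hdet]
  · rw [← Module.End.mul_eq_comp, map_mul, e.apply_symm_apply, Matrix.adjugate_mul, map_smul,
      ← Module.End.one_eq_id, map_one, hdet]

theorem bijective_lcomp_of_bijective_det_smul [Module.Free R M] [Module.Finite R M]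
    {N : Type*} [AddCommGroup N] [Module R N] (f : M →ₗ[R] M)
    (hN : Function.Bijective fun n : N => LinearMap.det f • n) :
    Function.Bijective (lcomp R N f) := by
  obtain ⟨g, hfg, hgf⟩ := exists_comp_eq_det_smul_id f
  let s : N ≃ₗ[R] N := LinearEquiv.ofBijective (LinearMap.det f • id) hN
  refine ⟨fun μ₁ μ₂ h => ext fun y => hN.1 ?_, fun φ => ⟨s.symm ∘ₗ φ ∘ₗ g, ext fun y => ?_⟩⟩
  · have hy : f (g y) = LinearMap.det f • y := congr($hfg y)
    simpa only [lcomp_apply, hy, map_smul] using congr($h (g y))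
  · have hy : g (f y) = LinearMap.det f • y := congr($hgf y)
    simp only [lcomp_apply, comp_apply, hy, map_smul]
    exact s.apply_symm_apply (φ y)

theorem exists_comp_eq_of_exact {N A B C : Type*} [AddCommGroup N] [AddCommGroup A]
    [AddCommGroup B] [AddCommGroup C] [Module R N] [Module R A] [Module R B] [Module R C]
    {ι : A →ₗ[R] B} {π : B →ₗ[R] C} (hexact : Function.Exact ι π) (hι : Function.Injective ι)
    {μ : N →ₗ[R] B} (hμ : π ∘ₗ μ = 0) : ∃ m : N →ₗ[R] A, ι ∘ₗ m = μ := by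
  have hrange (y : N) : μ y ∈ range ι := (hexact (μ y)).1 congr($hμ y)
  exact ⟨(LinearEquiv.ofInjective ι hι).symm ∘ₗ μ.codRestrict (range ι) hrange, ext fun y =>
    congr_arg Subtype.val ((LinearEquiv.ofInjective ι hι).apply_symm_apply ⟨μ y, hrange y⟩)⟩

end LinearMap

def ratModInt : ℚ →ₗ[ℤ] AddCircle (1 : ℚ) :=
  (QuotientAddGroup.mk' (AddSubgroup.zmultiples (1 : ℚ))).toIntLinearMap

@[simp]
theorem ratModInt_apply (r : ℚ) : ratModInt r = (r : AddCircle (1 : ℚ)) := rfl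

theorem surjective_ratModInt : Function.Surjective ratModInt :=
  QuotientAddGroup.mk_surjective

theorem exact_intCast_ratModInt : Function.Exact (Algebra.linearMap ℤ ℚ) ratModInt := by
  intro r
  rw [ratModInt_apply, AddCircle.coe_eq_zero_iff]
  simp [eq_comm]

section Duality

variable {Y X : Type*} [AddCommGroup Y] [AddCommGroup X] [Module.Free ℤ Y] [Module.Finite ℤ Y]
  {𝔄 : Y →ₗ[ℤ] Y} (hdet : LinearMap.det 𝔄 ≠ 0) (p : Y →ₗ[ℤ] X →ₗ[ℤ] ℤ) {𝔄' : X →ₗ[ℤ] X}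

noncomputable def lcompEquivRat : (Y →ₗ[ℤ] ℚ) ≃ₗ[ℤ] (Y →ₗ[ℤ] ℚ) :=
  LinearEquiv.ofBijective (lcomp ℤ ℚ 𝔄) <| bijective_lcomp_of_bijective_det_smul 𝔄 <| by
    simpa only [zsmul_eq_mul] using mulLeft_bijective₀ _ (Int.cast_ne_zero.mpr hdet)

/-- `invPairing hdet p x y` is the rational number `⟨𝔄⁻¹ y, x⟩`. -/
noncomputable def invPairing : X →ₗ[ℤ] Y →ₗ[ℤ] ℚ :=
  (lcompEquivRat hdet).symm.toLinearMap ∘ₗ compRight ℤ (Algebra.linearMap ℤ ℚ) ∘ₗ p.flip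

theorem eq_invPairing_iff {μ : Y →ₗ[ℤ] ℚ} {x : X} :
    μ = invPairing hdet p x ↔ μ ∘ₗ 𝔄 = Algebra.linearMap ℤ ℚ ∘ₗ p.flip x :=
  (lcompEquivRat hdet).eq_symm_apply.trans Iff.rfl

theorem invPairing_apply_map (x : X) (y : Y) : invPairing hdet p x (𝔄 y) = p y x :=
  congr($((eq_invPairing_iff hdet p).mp rfl) y)

theorem invPairing_apply_of_eq_smul {x : X} {y y' : Y} {n : ℤ} (hn : n ≠ 0)
    (hy : 𝔄 y' = n • y) : invPairing hdet p x y = p y' x / n := by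
  rw [eq_div_iff (Int.cast_ne_zero.mpr hn), mul_comm, ← zsmul_eq_mul, ← map_zsmul, ← hy,
    invPairing_apply_map]

theorem invPairing_map_adjoint (hadj : ∀ (y : Y) (x : X), p y (𝔄' x) = p (𝔄 y) x) (x : X) :
    invPairing hdet p (𝔄' x) = Algebra.linearMap ℤ ℚ ∘ₗ p.flip x :=
  ((eq_invPairing_iff hdet p).mpr (ext fun y => by simp [hadj])).symm

theorem range_le_ker_flip_invPairing_mod :
    range 𝔄 ≤ ker (compRight ℤ ratModInt ∘ₗ invPairing hdet p).flip := by
  rintro _ ⟨y, rfl⟩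
  ext x
  simp [invPairing_apply_map]

theorem range_le_ker_invPairing_mod (hadj : ∀ (y : Y) (x : X), p y (𝔄' x) = p (𝔄 y) x) :
    range 𝔄' ≤ ker (compRight ℤ ratModInt ∘ₗ invPairing hdet p) := by
  rintro _ ⟨x, rfl⟩
  ext y
  simp [invPairing_map_adjoint hdet p hadj]

noncomputable def torsionPairing (hadj : ∀ (y : Y) (x : X), p y (𝔄' x) = p (𝔄 y) x) :
    (X ⧸ range 𝔄') →ₗ[ℤ] (Y ⧸ range 𝔄) →ₗ[ℤ] AddCircle (1 : ℚ) :=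
  (compRight ℤ ratModInt ∘ₗ invPairing hdet p).liftQ₂ _ _
    (range_le_ker_invPairing_mod hdet p hadj) (range_le_ker_flip_invPairing_mod hdet p)

theorem torsionPairing_mk_mk (hadj : ∀ (y : Y) (x : X), p y (𝔄' x) = p (𝔄 y) x)
    (x : X) (y : Y) :
    torsionPairing hdet p hadj (Submodule.Quotient.mk x) (Submodule.Quotient.mk y) =
      (invPairing hdet p x y : AddCircle (1 : ℚ)) :=
  rfl

theorem injective_torsionPairing (hadj : ∀ (y : Y) (x : X), p y (𝔄' x) = p (𝔄 y) x)
    (hp : Function.Bijective p.flip) : Function.Injective (torsionPairing hdet p hadj) := by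
  refine (injective_iff_map_eq_zero _).mpr fun q hq => ?_
  obtain ⟨x, rfl⟩ := Submodule.Quotient.mk_surjective _ q
  have hx : compRight ℤ ratModInt (invPairing hdet p x) = 0 :=
    ext fun y => by simpa [torsionPairing_mk_mk] using congr($hq (Submodule.Quotient.mk y))
  obtain ⟨m, hm⟩ := exists_comp_eq_of_exact exact_intCast_ratModInt
    (Int.cast_injective (α := ℚ)) hx
  obtain ⟨x', rfl⟩ := hp.2 m
  have h𝔄' : p.flip (𝔄' x') = p.flip x := by
    refine ext fun y => Int.cast_injective (α := ℚ) ?_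
    simpa [hadj] using congr($((eq_invPairing_iff hdet p).mp hm) y)
  exact (Submodule.Quotient.mk_eq_zero _).mpr ⟨x', hp.1 h𝔄'⟩

theorem surjective_torsionPairing (hadj : ∀ (y : Y) (x : X), p y (𝔄' x) = p (𝔄 y) x)
    (hp : Function.Surjective p.flip) : Function.Surjective (torsionPairing hdet p hadj) := by
  intro h
  obtain ⟨L, hL⟩ := Module.projective_lifting_property ratModInt (h ∘ₗ (range 𝔄).mkQ)
    surjective_ratModInt
  have hL𝔄 : ratModInt ∘ₗ (L ∘ₗ 𝔄) = 0 := by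
    rw [← comp_assoc, hL, comp_assoc, (exact_map_mkQ_range 𝔄).linearMap_comp_eq_zero, comp_zero]
  obtain ⟨m, hm⟩ := exists_comp_eq_of_exact exact_intCast_ratModInt
    (Int.cast_injective (α := ℚ)) hL𝔄
  obtain ⟨x, rfl⟩ := hp m
  have hLx : L = invPairing hdet p x := (eq_invPairing_iff hdet p).mpr hm.symm
  refine ⟨Submodule.Quotient.mk x, Submodule.linearMap_qext _ (ext fun y => ?_)⟩
  simpa [torsionPairing_mk_mk, ← hLx] using congr($hL y)

end Duality

theorem stmt_8 {Y X : Type*} [AddCommGroup Y] [AddCommGroup X]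
    [Module.Free ℤ Y] [Module.Finite ℤ Y]
    (p : Y →ₗ[ℤ] X →ₗ[ℤ] ℤ)
    (hp' : Function.Bijective ⇑p.flip)
    (𝔄 : Y →ₗ[ℤ] Y) (hdet : LinearMap.det 𝔄 ≠ 0)
    (𝔄' : X →ₗ[ℤ] X) (hadj : ∀ (y : Y) (x : X), p y (𝔄' x) = p (𝔄 y) x) :
    (∀ y : Y, ∃ n : ℤ, n ≠ 0 ∧ ∃ y' : Y, 𝔄 y' = n • y) ∧
    ∃ e : (X ⧸ LinearMap.range 𝔄') ≃+ ((Y ⧸ LinearMap.range 𝔄) →+ AddCircle (1 : ℚ)),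
      ∀ (x : X) (y : Y) (n : ℤ) (y' : Y), n ≠ 0 → 𝔄 y' = n • y →
        e (Submodule.Quotient.mk x) (Submodule.Quotient.mk y) =
          (((p y' x : ℚ) / (n : ℚ) : ℚ) : AddCircle (1 : ℚ)) := by
  obtain ⟨g, h𝔄g, -⟩ := LinearMap.exists_comp_eq_det_smul_id 𝔄
  refine ⟨fun y => ⟨_, hdet, g y, congr($h𝔄g y)⟩, ?_⟩
  let e := LinearEquiv.ofBijective (torsionPairing hdet p hadj)
    ⟨injective_torsionPairing hdet p hadj hp', surjective_torsionPairing hdet p hadj hp'.2⟩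
  refine ⟨e.toAddEquiv.trans (addMonoidHomLequivInt ℤ).symm.toAddEquiv, fun x y n y' hn hy => ?_⟩
  exact congr_arg _ (invPairing_apply_of_eq_smul hdet p hn hy)
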